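/- arXiv:1901.07946 — 4 statements merged into one kernel-verified Lean document; each statement's English description precedes it below -/
import Mathlib

section
/- Let f₁ and f₂ be continuous concave real-valued functions on the compact convex set of two-qubit states. Then for every separable two-qubit state ρ there exist p ∈ [0,1] and pure product states |ab⟩ = |a⟩⊗|b⟩ and |cd⟩ = |c⟩⊗|d⟩ such that the state ρ* = (1−p)|ab⟩⟨ab| + p|cd⟩⟨cd| satisfies f₁(ρ*) ≤ f₁(ρ) and f₂(ρ*) ≤ f₂(ρ). -/
open Matrix
open scoped BigOperators ComplexOrder

noncomputable section

/-- Tensor (Kronecker) product of two vectors in ℂ², giving a vector in ℂ⁴,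
in the ordering |00⟩,|01⟩,|10⟩,|11⟩. -/
def tens (u v : Fin 2 → ℂ) : Fin 4 → ℂ :=
  ![u 0 * v 0, u 0 * v 1, u 1 * v 0, u 1 * v 1]

/-- The rank-one projector |ψ⟩⟨ψ|. -/
def proj (ψ : Fin 4 → ℂ) : Matrix (Fin 4) (Fin 4) ℂ :=
  vecMulVec ψ (star ψ)

/-- A two-qubit state: a positive semidefinite 4×4 complex matrix with trace 1. -/
def IsState (ρ : Matrix (Fin 4) (Fin 4) ℂ) : Prop :=
  ρ.PosSemidef ∧ ρ.trace = 1

/-- A separable two-qubit state: a finite convex combination of projectors onto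
product vectors |a⟩⊗|b⟩ with |a⟩,|b⟩ unit vectors. -/
def IsSepState (ρ : Matrix (Fin 4) (Fin 4) ℂ) : Prop :=
  ∃ (n : ℕ) (w : Fin n → ℝ) (a b : Fin n → Fin 2 → ℂ),
    (∀ i, 0 ≤ w i) ∧ (∑ i, w i = 1) ∧
    (∀ i, star (a i) ⬝ᵥ a i = 1) ∧ (∀ i, star (b i) ⬝ᵥ b i = 1) ∧
    ρ = ∑ i, (w i : ℂ) • proj (tens (a i) (b i))

/-- First-qubit index of a two-qubit basis index. -/
def q1 : Fin 4 → Fin 2 := ![0, 0, 1, 1]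
/-- Second-qubit index of a two-qubit basis index. -/
def q2 : Fin 4 → Fin 2 := ![0, 1, 0, 1]

/-- Single-qubit σ_z eigenbasis |0⟩,|1⟩. -/
def zb : Fin 2 → Fin 2 → ℂ := ![![1, 0], ![0, 1]]

/-- Single-qubit σ_x eigenbasis |+⟩,|−⟩. -/
def xb : Fin 2 → Fin 2 → ℂ :=
  ![![((1 / Real.sqrt 2 : ℝ) : ℂ), ((1 / Real.sqrt 2 : ℝ) : ℂ)],
    ![((1 / Real.sqrt 2 : ℝ) : ℂ), -((1 / Real.sqrt 2 : ℝ) : ℂ)]]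

/-- Single-qubit σ_y eigenbasis |y⁺⟩,|y⁻⟩. -/
def yb : Fin 2 → Fin 2 → ℂ :=
  ![![((1 / Real.sqrt 2 : ℝ) : ℂ), Complex.I * ((1 / Real.sqrt 2 : ℝ) : ℂ)],
    ![((1 / Real.sqrt 2 : ℝ) : ℂ), -(Complex.I * ((1 / Real.sqrt 2 : ℝ) : ℂ))]]

/-- The expectation value ⟨ψ|ρ|ψ⟩ (its real part). -/
def exval (ρ : Matrix (Fin 4) (Fin 4) ℂ) (ψ : Fin 4 → ℂ) : ℝ :=
  (star ψ ⬝ᵥ ρ.mulVec ψ).re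

/-- Outcome distribution of the local measurement σ_z⊗σ_z on ρ. -/
def zDist (ρ : Matrix (Fin 4) (Fin 4) ℂ) : Fin 4 → ℝ :=
  fun i => exval ρ (tens (zb (q1 i)) (zb (q2 i)))

/-- Outcome distribution of the local measurement σ_x⊗σ_x on ρ. -/
def xDist (ρ : Matrix (Fin 4) (Fin 4) ℂ) : Fin 4 → ℝ :=
  fun i => exval ρ (tens (xb (q1 i)) (xb (q2 i)))

/-- Outcome distribution of the local measurement σ_y⊗σ_y on ρ. -/
def yDist (ρ : Matrix (Fin 4) (Fin 4) ℂ) : Fin 4 → ℝ :=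
  fun i => exval ρ (tens (yb (q1 i)) (yb (q2 i)))

/-- Tsallis-q entropy of a probability vector. -/
def tsallis (q : ℝ) (p : Fin 4 → ℝ) : ℝ :=
  (1 - ∑ j, p j ^ q) / (q - 1)

/-- Tsallis-q entropy of the σ_z⊗σ_z outcome distribution. -/
def Szz (q : ℝ) (ρ : Matrix (Fin 4) (Fin 4) ℂ) : ℝ := tsallis q (zDist ρ)

/-- Tsallis-q entropy of the σ_x⊗σ_x outcome distribution. -/
def Sxx (q : ℝ) (ρ : Matrix (Fin 4) (Fin 4) ℂ) : ℝ := tsallis q (xDist ρ)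

/-- The family of states |ψ_t⟩ = (t|00⟩+|01⟩+|10⟩+|11⟩)/√(3+t²). -/
def psi (t : ℝ) : Fin 4 → ℂ :=
  fun i => ![(t : ℂ), 1, 1, 1] i / ((Real.sqrt (3 + t ^ 2) : ℝ) : ℂ)

/-- ρ is possibly separable w.r.t. local measurements σ_x⊗σ_x and σ_z⊗σ_z:
some separable state σ realizes the same scrambled data. -/
def PossiblySeparable (ρ : Matrix (Fin 4) (Fin 4) ℂ) : Prop :=
  ∃ σ, IsState σ ∧ IsSepState σ ∧
    ∃ π π' : Equiv.Perm (Fin 4),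
      (∀ i, xDist σ i = xDist ρ (π i)) ∧ (∀ i, zDist σ i = zDist ρ (π' i))

end
section Stmt4Aux

open Matrix Finset
open scoped ComplexOrder

noncomputable section

abbrev M4 := Matrix (Fin 4) (Fin 4) ℂ

def mix4 {n : ℕ} (P : Fin n → M4) (w : Fin n → ℝ) : M4 := ∑ i, w i • P i

lemma real_smul_eq (A : M4) (r : ℝ) : r • A = (r : ℂ) • A := by
  ext i j
  simp [Matrix.smul_apply, Complex.real_smul]

lemma posSemidef_real_smul {A : M4} (hA : A.PosSemidef) {r : ℝ} (hr : 0 ≤ r) :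
    (r • A).PosSemidef := by
  rw [real_smul_eq]
  refine PosSemidef.of_dotProduct_mulVec_nonneg ?_ fun x => ?_
  · have h1 := hA.1
    unfold Matrix.IsHermitian at *
    rw [conjTranspose_smul, h1, Complex.star_def, Complex.conj_ofReal]
  · rw [smul_mulVec, dotProduct_smul, smul_eq_mul]
    exact mul_nonneg (by exact_mod_cast hr) (hA.dotProduct_mulVec_nonneg x)

lemma isState_mix {n : ℕ} {P : Fin n → M4} {w : Fin n → ℝ}
    (hP : ∀ i, IsState (P i)) (hw : ∀ i, 0 ≤ w i) (hs : ∑ i, w i = 1) :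
    IsState (mix4 P w) := by
  constructor
  · exact Finset.sum_induction _ _ (fun A B hA hB => hA.add hB) Matrix.PosSemidef.zero
      (fun i _ => posSemidef_real_smul (hP i).1 (hw i))
  · rw [mix4, trace_sum]
    have h : ∀ i ∈ Finset.univ, (w i • P i).trace = ((w i : ℝ) : ℂ) := by
      intro i _
      rw [trace_smul, (hP i).2, Complex.real_smul, mul_one]
    rw [Finset.sum_congr rfl h]
    rw [← Complex.ofReal_sum, hs, Complex.ofReal_one]

lemma mix4_comb {n : ℕ} (P : Fin n → M4) (x y : Fin n → ℝ) (t : ℝ) :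
    mix4 P (t • x + (1 - t) • y) = t • mix4 P x + (1 - t) • mix4 P y := by
  unfold mix4
  rw [Finset.smul_sum, Finset.smul_sum, ← Finset.sum_add_distrib]
  refine Finset.sum_congr rfl fun i _ => ?_
  simp only [Pi.add_apply, Pi.smul_apply, smul_eq_mul]
  rw [add_smul, smul_smul, smul_smul]

end
end Stmt4Aux
section Stmt4Aux2
open Matrix Finset
open scoped ComplexOrder
noncomputable section

lemma tens_norm {a b : Fin 2 → ℂ} (ha : star a ⬝ᵥ a = 1) (hb : star b ⬝ᵥ b = 1) :
    star (tens a b) ⬝ᵥ tens a b = 1 := by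
  simp only [dotProduct, Fin.sum_univ_two, Pi.star_apply] at ha hb
  simp only [tens, dotProduct, Fin.sum_univ_four, Pi.star_apply]
  show star (a 0 * b 0) * (a 0 * b 0) + star (a 0 * b 1) * (a 0 * b 1)
    + star (a 1 * b 0) * (a 1 * b 0) + star (a 1 * b 1) * (a 1 * b 1) = 1
  simp only [star_mul']
  linear_combination (star (a 0) * a 0 + star (a 1) * a 1) * hb + ha

lemma isState_proj {ψ : Fin 4 → ℂ} (hψ : star ψ ⬝ᵥ ψ = 1) : IsState (proj ψ) := by
  constructor
  · refine PosSemidef.of_dotProduct_mulVec_nonneg ?_ fun x => ?_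
    · ext i j
      simp only [proj, conjTranspose_apply, vecMulVec_apply, Pi.star_apply, star_mul',
        star_star]
      ring
    · have hmv : (proj ψ) *ᵥ x = (star ψ ⬝ᵥ x) • ψ := by
        ext i
        simp only [proj, mulVec, dotProduct, vecMulVec_apply, Pi.star_apply, Pi.smul_apply,
          smul_eq_mul, Finset.sum_mul]
        exact Finset.sum_congr rfl fun j _ => by ring
      have hsd : star x ⬝ᵥ ψ = star (star ψ ⬝ᵥ x) := by
        simp only [dotProduct, Pi.star_apply, star_sum, star_mul', star_star]
        exact Finset.sum_congr rfl fun j _ => by ring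
      rw [hmv, dotProduct_smul, smul_eq_mul, hsd]
      exact mul_star_self_nonneg _
  · rw [← hψ]
    simp only [proj, trace, diag_apply, vecMulVec_apply, dotProduct, Pi.star_apply]
    exact Finset.sum_congr rfl fun j _ => by ring

end
end Stmt4Aux2
section Stmt4Aux3
open Matrix Finset
noncomputable section

def simplexSet (n : ℕ) : Set (Fin n → ℝ) := {x | (∀ i, 0 ≤ x i) ∧ ∑ i, x i = 1}

def simplexBdry (n : ℕ) : Set (Fin n → ℝ) := {x | x ∈ simplexSet n ∧ ∃ i, x i = 0}

/-- A vertex of the simplex. -/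
def svert {n : ℕ} (j : Fin n) : Fin n → ℝ := fun i => if i = j then 1 else 0

lemma svert_mem {n : ℕ} (j : Fin n) : svert j ∈ simplexSet n := by
  refine ⟨fun i => ?_, ?_⟩
  · unfold svert; split <;> norm_num
  · simp [svert]

lemma face_convex {n : ℕ} (i : Fin n) :
    Convex ℝ {x | x ∈ simplexSet n ∧ x i = 0} := by
  rintro x ⟨⟨hx0, hxs⟩, hxi⟩ y ⟨⟨hy0, hys⟩, hyi⟩ a b ha hb hab
  refine ⟨⟨fun j => ?_, ?_⟩, ?_⟩
  · have := hx0 j; have := hy0 j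
    simp only [Pi.add_apply, Pi.smul_apply, smul_eq_mul]
    nlinarith
  · simp only [Pi.add_apply, Pi.smul_apply, smul_eq_mul]
    rw [Finset.sum_add_distrib, ← Finset.mul_sum, ← Finset.mul_sum, hxs, hys]
    linarith
  · simp only [Pi.add_apply, Pi.smul_apply, smul_eq_mul, hxi, hyi]
    ring

lemma bdry_preconnected {n : ℕ} (hn : 3 ≤ n) : IsPreconnected (simplexBdry n) := by
  haveI : NeZero n := ⟨by omega⟩
  set i0 : Fin n := ⟨0, by omega⟩
  set i1 : Fin n := ⟨1, by omega⟩
  set i2 : Fin n := ⟨2, by omega⟩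
  have h01 : i0 ≠ i1 := by simp [i0, i1, Fin.ext_iff]
  have h12 : i1 ≠ i2 := by simp [i1, i2, Fin.ext_iff]
  have h02 : i0 ≠ i2 := by simp [i0, i2, Fin.ext_iff]
  have hF : ∀ i : Fin n, IsPreconnected {x | x ∈ simplexSet n ∧ x i = 0} :=
    fun i => (face_convex i).isPreconnected
  have hvmem : ∀ (j i : Fin n), i ≠ j → svert j ∈ {x | x ∈ simplexSet n ∧ x i = 0} := by
    intro j i hij
    exact ⟨svert_mem j, by simp [svert, hij]⟩
  apply isPreconnected_of_forall (svert i1)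
  rintro y ⟨hyΔ, i, hyi⟩
  by_cases hi : i = i1
  · -- connect through F i1 ∪ F i0
    refine ⟨{x | x ∈ simplexSet n ∧ x i1 = 0} ∪ {x | x ∈ simplexSet n ∧ x i0 = 0}, ?_, ?_, ?_, ?_⟩
    · rintro z (⟨hz, hz1⟩ | ⟨hz, hz0⟩)
      exacts [⟨hz, i1, hz1⟩, ⟨hz, i0, hz0⟩]
    · exact Or.inr (hvmem i1 i0 h01)
    · exact Or.inl ⟨hyΔ, by rwa [hi] at hyi⟩
    · exact IsPreconnected.union' ⟨svert i2, hvmem i2 i1 h12, hvmem i2 i0 h02⟩ (hF i1) (hF i0)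
  · refine ⟨{x | x ∈ simplexSet n ∧ x i = 0}, ?_, hvmem i1 i hi, ⟨hyΔ, hyi⟩, hF i⟩
    rintro z ⟨hz, hzi⟩
    exact ⟨hz, i, hzi⟩

end
end Stmt4Aux3
section Stmt4Aux4
open Matrix Finset
noncomputable section

lemma bdry_reduce {n : ℕ} (hn : 3 ≤ n) (G₁ G₂ : (Fin n → ℝ) → ℝ) (μ : Fin n → ℝ)
    (hμpos : ∀ i, 0 < μ i) (hμsum : ∑ i, μ i = 1)
    (hc₁ : ContinuousOn G₁ (simplexBdry n)) (hc₂ : ContinuousOn G₂ (simplexBdry n))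
    (hcv₁ : ∀ x ∈ simplexSet n, ∀ y ∈ simplexSet n, ∀ t : ℝ, 0 ≤ t → t ≤ 1 →
      t * G₁ x + (1 - t) * G₁ y ≤ G₁ (t • x + (1 - t) • y))
    (hcv₂ : ∀ x ∈ simplexSet n, ∀ y ∈ simplexSet n, ∀ t : ℝ, 0 ≤ t → t ≤ 1 →
      t * G₂ x + (1 - t) * G₂ y ≤ G₂ (t • x + (1 - t) • y)) :
    ∃ z ∈ simplexBdry n, G₁ z ≤ G₁ μ ∧ G₂ z ≤ G₂ μ := by
  haveI : NeZero n := ⟨by omega⟩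
  have hne : (Finset.univ : Finset (Fin n)).Nonempty := Finset.univ_nonempty
  set Mf : (Fin n → ℝ) → ℝ := fun x => Finset.univ.sup' hne fun i => (x i - μ i) / μ i with hMf
  have hMcont : Continuous Mf := Continuous.finset_sup'_apply hne fun i _ =>
    ((continuous_apply i).sub continuous_const).div_const _
  have hMpos : ∀ x ∈ simplexBdry n, 0 < Mf x := by
    rintro x ⟨⟨hx0, hxs⟩, i₀, hi₀⟩
    have hex : ∃ i, μ i < x i := by
      by_contra h
      push_neg at h
      have hlt : ∑ i, x i < ∑ i, μ i :=
        Finset.sum_lt_sum (fun i _ => h i) ⟨i₀, Finset.mem_univ _, by rw [hi₀]; exact hμpos i₀⟩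
      rw [hxs, hμsum] at hlt
      exact lt_irrefl 1 hlt
    obtain ⟨i, hi⟩ := hex
    have h0 : (0:ℝ) < (x i - μ i) / μ i := div_pos (by linarith) (hμpos i)
    exact lt_of_lt_of_le h0 (Finset.le_sup' (fun j => (x j - μ j) / μ j) (Finset.mem_univ i))
  set ant : (Fin n → ℝ) → (Fin n → ℝ) := fun x i => μ i + (μ i - x i) / Mf x with hant
  have hamem : ∀ x ∈ simplexBdry n, ant x ∈ simplexBdry n := by
    intro x hxD
    have hx0 := hxD.1.1
    have hxs := hxD.1.2
    have hM := hMpos x hxD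
    refine ⟨⟨fun i => ?_, ?_⟩, ?_⟩
    · have hle : (x i - μ i) / μ i ≤ Mf x := Finset.le_sup' (fun j => (x j - μ j) / μ j) (Finset.mem_univ i)
      have h1 : x i - μ i ≤ Mf x * μ i := (div_le_iff₀ (hμpos i)).1 hle
      have h2 : -(μ i) ≤ (μ i - x i) / Mf x := by
        rw [le_div_iff₀ hM]; nlinarith
      show 0 ≤ μ i + (μ i - x i) / Mf x
      linarith
    · show ∑ i, (μ i + (μ i - x i) / Mf x) = 1
      rw [Finset.sum_add_distrib, hμsum, ← Finset.sum_div, Finset.sum_sub_distrib, hμsum, hxs]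
      simp
    · obtain ⟨i, -, hieq⟩ := Finset.exists_mem_eq_sup' hne fun i => (x i - μ i) / μ i
      refine ⟨i, ?_⟩
      have hμi : μ i ≠ 0 := (hμpos i).ne'
      have hieq' : Mf x = (x i - μ i) / μ i := hieq
      have hxi : x i - μ i = Mf x * μ i := by
        rw [hieq']; field_simp
      show μ i + (μ i - x i) / Mf x = 0
      rw [show μ i - x i = -(Mf x * μ i) by linarith]
      field_simp
      ring
  have hchord : ∀ x ∈ simplexBdry n,
      (1/(1+Mf x)) • x + (1 - 1/(1+Mf x)) • ant x = μ := by
    intro x hxD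
    have hM := hMpos x hxD
    have h1 : (1:ℝ) + Mf x ≠ 0 := by linarith
    have h2 : Mf x ≠ 0 := ne_of_gt hM
    funext i
    show (1/(1+Mf x)) * x i + (1 - 1/(1+Mf x)) * (μ i + (μ i - x i) / Mf x) = μ i
    field_simp
    ring
  have hacont : ContinuousOn ant (simplexBdry n) := by
    rw [continuousOn_pi]
    intro i
    exact continuousOn_const.add ((continuousOn_const.sub (continuous_apply i).continuousOn).div
      hMcont.continuousOn fun x hx => (hMpos x hx).ne')
  have hDsub : simplexBdry n ⊆ simplexSet n := fun x hx => hx.1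
  have hminP : ∀ G : (Fin n → ℝ) → ℝ,
      (∀ x ∈ simplexSet n, ∀ y ∈ simplexSet n, ∀ t : ℝ, 0 ≤ t → t ≤ 1 →
        t * G x + (1 - t) * G y ≤ G (t • x + (1 - t) • y)) →
      ∀ x ∈ simplexBdry n, G x ≤ G μ ∨ G (ant x) ≤ G μ := by
    intro G hcv x hxD
    by_contra h
    push_neg at h
    obtain ⟨h1, h2⟩ := h
    have hM := hMpos x hxD
    have ht0 : 0 < 1/(1+Mf x) := div_pos one_pos (by linarith)
    have ht1 : 1/(1+Mf x) < 1 := by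
      rw [div_lt_one (by linarith)]; linarith
    have hineq := hcv x (hDsub hxD) (ant x) (hDsub (hamem x hxD)) (1/(1+Mf x)) ht0.le ht1.le
    rw [hchord x hxD] at hineq
    nlinarith [mul_lt_mul_of_pos_left h1 ht0,
      mul_le_mul_of_nonneg_left h2.le (by linarith : (0:ℝ) ≤ 1 - 1/(1+Mf x))]
  -- the base point
  have h10 : (⟨0, by omega⟩ : Fin n) ≠ ⟨1, by omega⟩ := by simp [Fin.ext_iff]
  have hx₀D : svert (⟨1, by omega⟩ : Fin n) ∈ simplexBdry n :=
    ⟨svert_mem _, ⟨0, by omega⟩, by simp [svert, h10]⟩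
  haveI : PreconnectedSpace (simplexBdry n) := Subtype.preconnectedSpace (bdry_preconnected hn)
  let amap : simplexBdry n → simplexBdry n := fun x => ⟨ant x.1, hamem x.1 x.2⟩
  have hamapc : Continuous amap :=
    Continuous.subtype_mk (continuousOn_iff_continuous_restrict.mp hacont) _
  by_contra hno
  push_neg at hno
  set A : Set (simplexBdry n) := {x | G₁ x.1 ≤ G₁ μ} with hA
  have hg₁ : Continuous fun x : simplexBdry n => G₁ x.1 :=
    continuousOn_iff_continuous_restrict.mp hc₁
  have hAcl : IsClosed A := isClosed_le hg₁ continuous_const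
  have hP₁ : ∀ x : simplexBdry n, x ∈ A ∨ amap x ∈ A := fun x => hminP G₁ hcv₁ x.1 x.2
  have hP₂ : ∀ x : simplexBdry n, G₂ x.1 ≤ G₂ μ ∨ G₂ (amap x).1 ≤ G₂ μ :=
    fun x => hminP G₂ hcv₂ x.1 x.2
  have hkey : ∃ x : simplexBdry n, x ∈ A ∧ amap x ∈ A := by
    by_contra h
    push_neg at h
    have heq : A = amap ⁻¹' Aᶜ :=
      Set.Subset.antisymm (fun x hx => h x hx) (fun x hx => (hP₁ x).resolve_right hx)
    have hclopen : IsClopen A := ⟨hAcl, heq ▸ hAcl.isOpen_compl.preimage hamapc⟩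
    rcases isClopen_iff.mp hclopen with h0 | h1
    · rcases hP₁ ⟨_, hx₀D⟩ with hh | hh <;> · rw [h0] at hh; exact hh
    · have hmem : ∀ y : simplexBdry n, y ∈ A := fun y => h1 ▸ Set.mem_univ y
      exact h ⟨_, hx₀D⟩ (hmem _) (hmem _)
  obtain ⟨x, hxA, haxA⟩ := hkey
  rcases hP₂ x with h | h
  · exact absurd (hno x.1 x.2 hxA) (not_lt.2 h)
  · exact absurd (hno (amap x).1 (amap x).2 haxA) (not_lt.2 h)

end
end Stmt4Aux4
section Stmt4Aux5
open Matrix Finset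
noncomputable section

lemma sum_removal {m : ℕ} (w : Fin (m+1) → ℝ) (i₀ : Fin (m+1)) (h0 : w i₀ = 0) :
    ∑ i : Fin m, w (i₀.succAbove i) = ∑ i, w i := by
  rw [Fin.sum_univ_succAbove w i₀, h0, zero_add]

lemma mix4_removal {m : ℕ} (P : Fin (m+1) → M4) (w : Fin (m+1) → ℝ) (i₀ : Fin (m+1))
    (h0 : w i₀ = 0) : mix4 (P ∘ i₀.succAbove) (w ∘ i₀.succAbove) = mix4 P w := by
  unfold mix4
  rw [Fin.sum_univ_succAbove (fun i => w i • P i) i₀, h0, zero_smul, zero_add]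
  rfl

lemma key4 (f₁ f₂ : Matrix (Fin 4) (Fin 4) ℂ → ℝ)
    (hcont₁ : ContinuousOn f₁ {ρ | IsState ρ})
    (hcont₂ : ContinuousOn f₂ {ρ | IsState ρ})
    (hconc₁ : ∀ ρ σ : Matrix (Fin 4) (Fin 4) ℂ, IsState ρ → IsState σ →
      ∀ lam : ℝ, 0 ≤ lam → lam ≤ 1 →
        lam * f₁ ρ + (1 - lam) * f₁ σ ≤ f₁ (lam • ρ + (1 - lam) • σ))
    (hconc₂ : ∀ ρ σ : Matrix (Fin 4) (Fin 4) ℂ, IsState ρ → IsState σ →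
      ∀ lam : ℝ, 0 ≤ lam → lam ≤ 1 →
        lam * f₂ ρ + (1 - lam) * f₂ σ ≤ f₂ (lam • ρ + (1 - lam) • σ)) :
    ∀ (n : ℕ) (P : Fin n → M4) (w : Fin n → ℝ), (∀ i, IsState (P i)) → (∀ i, 0 ≤ w i) →
      (∑ i, w i = 1) →
      ∃ i, ∃ j, ∃ p : ℝ, 0 ≤ p ∧ p ≤ 1 ∧
        f₁ ((1 - p) • P i + p • P j) ≤ f₁ (mix4 P w) ∧
        f₂ ((1 - p) • P i + p • P j) ≤ f₂ (mix4 P w) := by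
  intro n
  induction n using Nat.strong_induction_on with
  | _ n IH =>
  intro P w hP hw hsum
  rcases n with _ | m
  · simp at hsum
  by_cases hz : ∃ i, w i = 0
  · obtain ⟨i₀, hi₀⟩ := hz
    have hsum' : ∑ i : Fin m, (w ∘ i₀.succAbove) i = 1 := by
      rw [show ∑ i : Fin m, (w ∘ i₀.succAbove) i = ∑ i : Fin m, w (i₀.succAbove i) from rfl,
        sum_removal w i₀ hi₀, hsum]
    obtain ⟨i, j, p, hp0, hp1, h1, h2⟩ := IH m (Nat.lt_succ_self m) (P ∘ i₀.succAbove)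
      (w ∘ i₀.succAbove) (fun i => hP _) (fun i => hw _) hsum'
    rw [mix4_removal P w i₀ hi₀] at h1 h2
    exact ⟨i₀.succAbove i, i₀.succAbove j, p, hp0, hp1, h1, h2⟩
  · push_neg at hz
    have hwpos : ∀ i, 0 < w i := fun i => (hw i).lt_of_ne (Ne.symm (hz i))
    rcases lt_or_ge (m+1) 3 with hsmall | hbig
    · rcases m with _ | m'
      · -- one term
        have hw0 : w 0 = 1 := by simpa [Fin.sum_univ_one] using hsum
        refine ⟨0, 0, 0, le_refl 0, zero_le_one, ?_, ?_⟩ <;>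
        · apply le_of_eq
          congr 1
          simp [mix4, Fin.sum_univ_one, hw0]
      · have hm' : m' = 0 := by omega
        subst hm'
        -- two terms
        have hw01 : w 0 + w 1 = 1 := by simpa [Fin.sum_univ_two] using hsum
        refine ⟨0, 1, w 1, hw 1, by linarith [hwpos 0], ?_, ?_⟩ <;>
        · apply le_of_eq
          congr 1
          rw [show (1 : ℝ) - w 1 = w 0 by linarith]
          simp [mix4, Fin.sum_univ_two]
    · -- at least three terms, all weights positive
      have hmixc : Continuous fun x : Fin (m+1) → ℝ => mix4 P x :=
        continuous_finset_sum _ fun i _ => (continuous_apply i).smul continuous_const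
      have hmaps : ∀ x ∈ simplexBdry (m+1), mix4 P x ∈ {ρ | IsState ρ} := fun x hx =>
        isState_mix hP hx.1.1 hx.1.2
      have hG₁cont : ContinuousOn (fun x => f₁ (mix4 P x)) (simplexBdry (m+1)) :=
        hcont₁.comp hmixc.continuousOn hmaps
      have hG₂cont : ContinuousOn (fun x => f₂ (mix4 P x)) (simplexBdry (m+1)) :=
        hcont₂.comp hmixc.continuousOn hmaps
      have hcv : ∀ f : Matrix (Fin 4) (Fin 4) ℂ → ℝ,
          (∀ ρ σ : Matrix (Fin 4) (Fin 4) ℂ, IsState ρ → IsState σ →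
            ∀ lam : ℝ, 0 ≤ lam → lam ≤ 1 →
              lam * f ρ + (1 - lam) * f σ ≤ f (lam • ρ + (1 - lam) • σ)) →
          ∀ x ∈ simplexSet (m+1), ∀ y ∈ simplexSet (m+1), ∀ t : ℝ, 0 ≤ t → t ≤ 1 →
            t * f (mix4 P x) + (1 - t) * f (mix4 P y) ≤ f (mix4 P (t • x + (1 - t) • y)) := by
        intro f hconc x hx y hy t ht0 ht1
        rw [mix4_comb]
        exact hconc _ _ (isState_mix hP hx.1 hx.2) (isState_mix hP hy.1 hy.2) t ht0 ht1
      obtain ⟨z, hzD, hz1, hz2⟩ := bdry_reduce hbig (fun x => f₁ (mix4 P x))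
        (fun x => f₂ (mix4 P x)) w hwpos hsum hG₁cont hG₂cont (hcv f₁ hconc₁) (hcv f₂ hconc₂)
      obtain ⟨i₀, hi₀⟩ := hzD.2
      have hsum' : ∑ i : Fin m, (z ∘ i₀.succAbove) i = 1 := by
        rw [show ∑ i : Fin m, (z ∘ i₀.succAbove) i = ∑ i : Fin m, z (i₀.succAbove i) from rfl,
          sum_removal z i₀ hi₀, hzD.1.2]
      obtain ⟨i, j, p, hp0, hp1, h1, h2⟩ := IH m (Nat.lt_succ_self m) (P ∘ i₀.succAbove)
        (z ∘ i₀.succAbove) (fun i => hP _) (fun i => hzD.1.1 _) hsum'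
      rw [mix4_removal P z i₀ hi₀] at h1 h2
      exact ⟨i₀.succAbove i, i₀.succAbove j, p, hp0, hp1, le_trans h1 hz1, le_trans h2 hz2⟩

end
end Stmt4Aux5

/-- If f₁, f₂ are continuous concave functions on the set of two-qubit
states, then every separable state ρ admits a state ρ* = (1−p)|ab⟩⟨ab| + p|cd⟩⟨cd|
(a mixture of two pure product states) with f₁(ρ*) ≤ f₁(ρ) and f₂(ρ*) ≤ f₂(ρ). -/
theorem stmt4 (f₁ f₂ : Matrix (Fin 4) (Fin 4) ℂ → ℝ)
    (hcont₁ : ContinuousOn f₁ {ρ | IsState ρ})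
    (hcont₂ : ContinuousOn f₂ {ρ | IsState ρ})
    (hconc₁ : ∀ ρ σ : Matrix (Fin 4) (Fin 4) ℂ, IsState ρ → IsState σ →
      ∀ lam : ℝ, 0 ≤ lam → lam ≤ 1 →
        lam * f₁ ρ + (1 - lam) * f₁ σ ≤ f₁ (lam • ρ + (1 - lam) • σ))
    (hconc₂ : ∀ ρ σ : Matrix (Fin 4) (Fin 4) ℂ, IsState ρ → IsState σ →
      ∀ lam : ℝ, 0 ≤ lam → lam ≤ 1 →
        lam * f₂ ρ + (1 - lam) * f₂ σ ≤ f₂ (lam • ρ + (1 - lam) • σ))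
    (ρ : Matrix (Fin 4) (Fin 4) ℂ) (hρ : IsState ρ) (hsep : IsSepState ρ) :
    ∃ (p : ℝ) (a b c d : Fin 2 → ℂ), 0 ≤ p ∧ p ≤ 1 ∧
      star a ⬝ᵥ a = 1 ∧ star b ⬝ᵥ b = 1 ∧ star c ⬝ᵥ c = 1 ∧ star d ⬝ᵥ d = 1 ∧
      f₁ ((1 - p) • proj (tens a b) + p • proj (tens c d)) ≤ f₁ ρ ∧
      f₂ ((1 - p) • proj (tens a b) + p • proj (tens c d)) ≤ f₂ ρ := by
  obtain ⟨n, w, a, b, hw0, hwsum, hna, hnb, hrep⟩ := hsep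
  have hPstate : ∀ i, IsState (proj (tens (a i) (b i))) := fun i =>
    isState_proj (tens_norm (hna i) (hnb i))
  have hρeq : ρ = mix4 (fun i => proj (tens (a i) (b i))) w := by
    rw [hrep]
    simp only [mix4]
    exact Finset.sum_congr rfl fun i _ => (real_smul_eq _ _).symm
  obtain ⟨i, j, p, hp0, hp1, h1, h2⟩ :=
    key4 f₁ f₂ hcont₁ hcont₂ hconc₁ hconc₂ n _ w hPstate hw0 hwsum
  exact ⟨p, a i, b i, a j, b j, hp0, hp1, hna i, hnb i, hna j, hnb j,
    by rw [hρeq]; exact h1, by rw [hρeq]; exact h2⟩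
end

section
/- The set of possibly separable two-qubit states is star-convex with respect to the maximally mixed state 𝟙/4: if ρ is possibly separable, then for every λ ∈ [0,1] the state λρ + (1−λ)·𝟙/4 is possibly separable. -/
open Matrix
open scoped BigOperators ComplexOrder

lemma proj_posSemidef (ψ : Fin 4 → ℂ) : (proj ψ).PosSemidef := by
  refine Matrix.PosSemidef.of_dotProduct_mulVec_nonneg ?_ ?_
  · ext i j
    simp [proj, Matrix.conjTranspose_apply, Matrix.vecMulVec_apply, mul_comm]
  · intro x
    have h : (proj ψ) *ᵥ x = fun i => ψ i * (star ψ ⬝ᵥ x) := by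
      funext i
      simp [proj, Matrix.mulVec, Matrix.vecMulVec_apply, dotProduct, Finset.mul_sum, mul_assoc]
    rw [h]
    have hc : star (star ψ ⬝ᵥ x) = star x ⬝ᵥ ψ := by
      simp [dotProduct, star_sum, mul_comm]
    have h2 : star x ⬝ᵥ (fun i => ψ i * (star ψ ⬝ᵥ x))
        = star (star ψ ⬝ᵥ x) * (star ψ ⬝ᵥ x) := by
      rw [hc]
      simp [dotProduct, Finset.sum_mul, mul_assoc]
    rw [h2]
    exact star_mul_self_nonneg _

lemma proj_trace (ψ : Fin 4 → ℂ) : (proj ψ).trace = star ψ ⬝ᵥ ψ := by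
  simp [proj, Matrix.trace, Matrix.vecMulVec_apply, dotProduct, Matrix.diag, mul_comm]

lemma tens_norm_s7 (u v : Fin 2 → ℂ) :
    star (tens u v) ⬝ᵥ tens u v = (star u ⬝ᵥ u) * (star v ⬝ᵥ v) := by
  simp [tens, dotProduct, Fin.sum_univ_two, Fin.sum_univ_four]
  ring

lemma smul_posSemidef {M : Matrix (Fin 4) (Fin 4) ℂ} (hM : M.PosSemidef)
    {w : ℝ} (hw : 0 ≤ w) : ((w : ℂ) • M).PosSemidef := by
  refine Matrix.PosSemidef.of_dotProduct_mulVec_nonneg ?_ ?_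
  · ext i j
    simp [Matrix.conjTranspose_apply, hM.1.apply]
  · intro x
    rw [Matrix.smul_mulVec, dotProduct_smul, smul_eq_mul]
    exact mul_nonneg (by exact_mod_cast Complex.zero_le_real.mpr hw) (hM.dotProduct_mulVec_nonneg x)

lemma sep_isState {σ : Matrix (Fin 4) (Fin 4) ℂ} (h : IsSepState σ) : IsState σ := by
  obtain ⟨n, w, a, b, hw, hw1, ha, hb, rfl⟩ := h
  constructor
  · exact Finset.sum_induction _ _ (fun A B hA hB => hA.add hB) .zero
      (fun i _ => smul_posSemidef (proj_posSemidef _) (hw i))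
  · rw [Matrix.trace_sum]
    simp only [Matrix.trace_smul, proj_trace, tens_norm_s7, ha, hb, smul_eq_mul, mul_one]
    exact_mod_cast congrArg (Complex.ofReal) hw1

lemma zb_norm (j : Fin 2) : star (zb j) ⬝ᵥ zb j = 1 := by
  fin_cases j <;> simp [zb, dotProduct, Fin.sum_univ_two]

lemma xb_norm (j : Fin 2) : star (xb j) ⬝ᵥ xb j = 1 := by
  have h2 : Real.sqrt 2 * Real.sqrt 2 = 2 := Real.mul_self_sqrt (by norm_num)
  fin_cases j <;>
    · simp [xb, dotProduct, Fin.sum_univ_two, Complex.star_def, Complex.conj_ofReal]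
      rw [← Complex.ofReal_inv, ← Complex.ofReal_mul]
      norm_cast
      field_simp
      norm_num

lemma real_smul_mat (r : ℝ) (M : Matrix (Fin 4) (Fin 4) ℂ) : r • M = (r : ℂ) • M := by
  ext i j
  simp [Matrix.smul_apply, Complex.real_smul]

lemma one_eq_sum : (1 : Matrix (Fin 4) (Fin 4) ℂ)
    = ∑ j : Fin 4, proj (tens (zb (q1 j)) (zb (q2 j))) := by
  ext i k
  rw [Matrix.sum_apply, Fin.sum_univ_four]
  fin_cases i <;> fin_cases k <;>
    simp [Fin.sum_univ_four, Matrix.sum_apply, Finset.sum_apply, proj, tens, zb, q1, q2,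
      Matrix.vecMulVec_apply, Matrix.one_apply]

lemma sep_mix {σ : Matrix (Fin 4) (Fin 4) ℂ} (h : IsSepState σ) {lam : ℝ}
    (h0 : 0 ≤ lam) (h1 : lam ≤ 1) :
    IsSepState (lam • σ + (1 - lam) • ((1 / 4 : ℂ) • (1 : Matrix (Fin 4) (Fin 4) ℂ))) := by
  obtain ⟨n, w, a, b, hw, hw1, ha, hb, hσ⟩ := h
  refine ⟨n + 4, Fin.append (fun i => lam * w i) (fun _ => (1 - lam) / 4),
    Fin.append a (fun j => zb (q1 j)), Fin.append b (fun j => zb (q2 j)), ?_, ?_, ?_, ?_, ?_⟩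
  · intro i
    refine Fin.addCases (fun i => ?_) (fun j => ?_) i
    · rw [Fin.append_left]; exact mul_nonneg h0 (hw i)
    · rw [Fin.append_right]
      have : 0 ≤ 1 - lam := by linarith
      positivity
  · rw [Fin.sum_univ_add]
    simp only [Fin.append_left, Fin.append_right, ← Finset.mul_sum, hw1]
    simp
    ring
  · intro i
    refine Fin.addCases (fun i => ?_) (fun j => ?_) i
    · rw [Fin.append_left]; exact ha i
    · rw [Fin.append_right]; exact zb_norm _
  · intro i
    refine Fin.addCases (fun i => ?_) (fun j => ?_) i
    · rw [Fin.append_left]; exact hb i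
    · rw [Fin.append_right]; exact zb_norm _
  · rw [Fin.sum_univ_add]
    simp only [Fin.append_left, Fin.append_right]
    have e1 : ∑ i : Fin n, ((lam * w i : ℝ) : ℂ) • proj (tens (a i) (b i))
        = lam • σ := by
      rw [real_smul_mat, hσ, Finset.smul_sum]
      refine Finset.sum_congr rfl fun i _ => ?_
      push_cast
      rw [mul_smul]
    have e2 : ∑ j : Fin 4, (((1 - lam) / 4 : ℝ) : ℂ) • proj (tens (zb (q1 j)) (zb (q2 j)))
        = (1 - lam) • ((1 / 4 : ℂ) • (1 : Matrix (Fin 4) (Fin 4) ℂ)) := by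
      rw [← Finset.smul_sum, ← one_eq_sum, real_smul_mat, smul_smul]
      congr 1
      push_cast
      ring
    rw [e1, e2]

lemma exval_mix (A : Matrix (Fin 4) (Fin 4) ℂ) {ψ : Fin 4 → ℂ}
    (hψ : star ψ ⬝ᵥ ψ = 1) (lam : ℝ) :
    exval (lam • A + (1 - lam) • ((1 / 4 : ℂ) • (1 : Matrix (Fin 4) (Fin 4) ℂ))) ψ
      = lam * exval A ψ + (1 - lam) / 4 := by
  rw [real_smul_mat, real_smul_mat]
  simp only [exval, Matrix.add_mulVec, smul_smul, Matrix.smul_mulVec, dotProduct_add,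
    dotProduct_smul, smul_eq_mul, Matrix.one_mulVec, hψ, mul_one]
  rw [Complex.add_re]
  norm_num [Complex.re_ofReal_mul]
  ring

/-- The set of possibly separable two-qubit states is star-convex with
respect to the maximally mixed state 𝟙/4: if ρ is possibly separable, then so is
λρ + (1−λ)·𝟙/4 for every λ ∈ [0,1]. -/
theorem stmt7 (ρ : Matrix (Fin 4) (Fin 4) ℂ) (hρ : IsState ρ)
    (h : PossiblySeparable ρ) (lam : ℝ) (h0 : 0 ≤ lam) (h1 : lam ≤ 1) :
    PossiblySeparable
      (lam • ρ + (1 - lam) • ((1 / 4 : ℂ) • (1 : Matrix (Fin 4) (Fin 4) ℂ))) := by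
  obtain ⟨σ, hstate, hsep, π, π', hx, hz⟩ := h
  refine ⟨lam • σ + (1 - lam) • ((1 / 4 : ℂ) • (1 : Matrix (Fin 4) (Fin 4) ℂ)),
    sep_isState (sep_mix hsep h0 h1), sep_mix hsep h0 h1, π, π', ?_, ?_⟩
  · intro i
    have n1 : star (tens (xb (q1 i)) (xb (q2 i))) ⬝ᵥ tens (xb (q1 i)) (xb (q2 i)) = 1 := by
      rw [tens_norm_s7, xb_norm, xb_norm, mul_one]
    have n2 : star (tens (xb (q1 (π i))) (xb (q2 (π i)))) ⬝ᵥ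
        tens (xb (q1 (π i))) (xb (q2 (π i))) = 1 := by
      rw [tens_norm_s7, xb_norm, xb_norm, mul_one]
    simp only [xDist]
    rw [exval_mix _ n1, exval_mix _ n2]
    have := hx i
    simp only [xDist] at this
    rw [this]
  · intro i
    have n1 : star (tens (zb (q1 i)) (zb (q2 i))) ⬝ᵥ tens (zb (q1 i)) (zb (q2 i)) = 1 := by
      rw [tens_norm_s7, zb_norm, zb_norm, mul_one]
    have n2 : star (tens (zb (q1 (π' i))) (zb (q2 (π' i)))) ⬝ᵥ
        tens (zb (q1 (π' i))) (zb (q2 (π' i))) = 1 := by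
      rw [tens_norm_s7, zb_norm, zb_norm, mul_one]
    simp only [zDist]
    rw [exval_mix _ n1, exval_mix _ n2]
    have := hz i
    simp only [zDist] at this
    rw [this]
end

section
/- The function t ↦ S_zz^(2)(|ψ_t⟩⟨ψ_t|) = 1 − (t⁴ + 3)/(3 + t²)² is strictly decreasing on [1, ∞), takes the value 3/4 at t = 1, and tends to 0 as t → ∞; in particular, for every k ∈ (0, 3/4] there is a unique t ≥ 1 with S_zz^(2)(|ψ_t⟩⟨ψ_t|) = k. -/
open Matrix
open scoped BigOperators ComplexOrder

noncomputable section

set_option maxHeartbeats 1000000 in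
lemma zDist_psi (t : ℝ) (i : Fin 4) :
    zDist (proj (psi t)) i = ![t^2/(3+t^2), 1/(3+t^2), 1/(3+t^2), 1/(3+t^2)] i := by
  have h3 : (0:ℝ) < 3 + t ^ 2 := by positivity
  have hs : Real.sqrt (3 + t ^ 2) * Real.sqrt (3 + t ^ 2) = 3 + t ^ 2 :=
    Real.mul_self_sqrt h3.le
  have hs0 : Real.sqrt (3 + t ^ 2) ≠ 0 := by positivity
  fin_cases i <;>
  · simp [zDist, exval, proj, tens, zb, q1, q2, psi, Matrix.mulVec, dotProduct,
      Fin.sum_univ_four, vecMulVec, ← Complex.ofReal_pow, ← Complex.ofReal_inv, ← pow_two,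
      Real.sq_sqrt h3.le] <;>
    simp only [← Complex.ofReal_div, ← Complex.ofReal_pow, Complex.ofReal_re, div_pow,
      Real.sq_sqrt h3.le]

end

lemma szz_eq (t : ℝ) : Szz 2 (proj (psi t)) = 1 - (t ^ 4 + 3) / (3 + t ^ 2) ^ 2 := by
  have h3 : (0:ℝ) < 3 + t ^ 2 := by positivity
  have h := zDist_psi t
  simp only [Szz, tsallis, Fin.sum_univ_four, h 0, h 1, h 2, h 3, Matrix.cons_val]
  norm_num
  field_simp
  ring

lemma szz_eq' : (fun t : ℝ => Szz 2 (proj (psi t)))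
    = fun t : ℝ => (6 * t ^ 2 + 6) / (3 + t ^ 2) ^ 2 := by
  funext t
  have h3 : (0:ℝ) < 3 + t ^ 2 := by positivity
  rw [szz_eq]
  field_simp
  ring

lemma f_anti : StrictAntiOn (fun t : ℝ => Szz 2 (proj (psi t))) (Set.Ici 1) := by
  intro s hs t ht hst
  simp only [Set.mem_Ici] at hs ht
  simp only [szz_eq]
  have h1 : (0:ℝ) < (3+s^2)^2 := by positivity
  have h2 : (0:ℝ) < (3+t^2)^2 := by positivity
  have hst2 : s^2 < t^2 := by nlinarith
  have key : (s^4+3)/(3+s^2)^2 < (t^4+3)/(3+t^2)^2 := by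
    rw [div_lt_div_iff₀ h1 h2]
    have hpos : 0 < (t^2 - s^2) * (t^2 + s^2 + s^2*t^2 - 3) := by
      apply mul_pos (by linarith)
      have hs2 : 1 ≤ s ^ 2 := by nlinarith
      have ht2 : 1 ≤ t ^ 2 := by nlinarith
      have h12 : 1 ≤ s ^ 2 * t ^ 2 := by nlinarith
      linarith
    nlinarith [hpos]
  linarith

lemma f_cont : Continuous (fun t : ℝ => Szz 2 (proj (psi t))) := by
  rw [szz_eq']
  exact Continuous.div (by continuity) (by continuity) (fun x => by positivity)

lemma f_tendsto : Filter.Tendsto (fun t : ℝ => Szz 2 (proj (psi t)))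
    Filter.atTop (nhds 0) := by
  rw [szz_eq']
  have h12 : Filter.Tendsto (fun t : ℝ => (12:ℝ) / t ^ 2) Filter.atTop (nhds 0) :=
    Filter.Tendsto.div_atTop tendsto_const_nhds (Filter.tendsto_pow_atTop two_ne_zero)
  apply tendsto_of_tendsto_of_tendsto_of_le_of_le' tendsto_const_nhds h12
  · filter_upwards with t
    positivity
  · filter_upwards [Filter.eventually_ge_atTop (1:ℝ)] with t ht
    rw [div_le_div_iff₀ (by positivity) (by positivity)]
    nlinarith [sq_nonneg t, sq_nonneg (t^2 - 1)]

/-- t ↦ S_zz^(2)(|ψ_t⟩⟨ψ_t|) = 1 − (t⁴+3)/(3+t²)² is strictly decreasing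
on [1,∞), equals 3/4 at t = 1, tends to 0 as t → ∞, and for every k ∈ (0, 3/4] there
is a unique t ≥ 1 with S_zz^(2)(|ψ_t⟩⟨ψ_t|) = k. -/
theorem stmt11 :
    (∀ t : ℝ, 1 ≤ t →
      Szz 2 (proj (psi t)) = 1 - (t ^ 4 + 3) / (3 + t ^ 2) ^ 2) ∧
    StrictAntiOn (fun t : ℝ => Szz 2 (proj (psi t))) (Set.Ici 1) ∧
    Szz 2 (proj (psi 1)) = 3 / 4 ∧
    Filter.Tendsto (fun t : ℝ => Szz 2 (proj (psi t))) Filter.atTop (nhds 0) ∧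
    ∀ k : ℝ, 0 < k → k ≤ 3 / 4 →
      ∃! t : ℝ, 1 ≤ t ∧ Szz 2 (proj (psi t)) = k := by
  have h1 : Szz 2 (proj (psi 1)) = 3 / 4 := by rw [szz_eq]; norm_num
  refine ⟨fun t _ => szz_eq t, f_anti, h1, f_tendsto, fun k hk hk' => ?_⟩
  set F : ℝ → ℝ := fun t => Szz 2 (proj (psi t)) with hF
  obtain ⟨T, hT1, hTk⟩ : ∃ T : ℝ, 1 ≤ T ∧ F T < k := by
    have := (f_tendsto.eventually_lt_const hk).and (Filter.eventually_ge_atTop (1:ℝ))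
    obtain ⟨T, hT⟩ := this.exists
    exact ⟨T, hT.2, hT.1⟩
  have hmem : k ∈ Set.Icc (F T) (F 1) := ⟨hTk.le, by show k ≤ Szz 2 (proj (psi 1)); rw [h1]; exact hk'⟩
  obtain ⟨t, ht, htk⟩ := intermediate_value_Icc' hT1 f_cont.continuousOn hmem
  refine ⟨t, ⟨ht.1, htk⟩, fun y hy => ?_⟩
  exact f_anti.injOn (Set.mem_Ici.mpr hy.1) (Set.mem_Ici.mpr ht.1) (hy.2.trans htk.symm)
end

section
/- Let 1/4 ≤ k ≤ 1 and let t ≥ 1 satisfy (t⁴ + 3)/(3 + t²)² = k (such t exists and is unique). Then for all y₁, y₂, y₃, y₄ ≥ 0 with y₁+y₂+y₃+y₄ = 1 and y₁²+y₂²+y₃²+y₄² = k, one has y₁y₂y₃y₄ ≤ t²/(3+t²)⁴, with equality attained at (y₁,y₂,y₃,y₄) = (t², 1, 1, 1)/(3+t²). -/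
open Matrix
open scoped BigOperators ComplexOrder

lemma stmt12_sqle (a b : ℝ) (ha : 0 ≤ a) (hb : 0 ≤ b) (h : a^2 ≤ b^2) : a ≤ b := by
  nlinarith

lemma stmt12_H1pos (u c v : ℝ) (hu : 0 ≤ u) (hv : 0 ≤ v) (huc : 4*u ≤ 3*c) :
    0 ≤ 108*c^2*v - u*(180*c*v - 36*c^2) + u^2*(80*v - 64*c) + 28*u^3 := by
  nlinarith [mul_nonneg hu (sq_nonneg (3*c-4*u)), mul_nonneg hv (sq_nonneg (3*c-5*u)),
    mul_nonneg hu (mul_nonneg hv (by linarith : (0:ℝ) ≤ 3*c-4*u)),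
    mul_nonneg hu (sq_nonneg (c-u)), mul_nonneg hv (sq_nonneg (c-2*u)),
    mul_nonneg (mul_nonneg hu hu) hu, mul_nonneg (mul_nonneg hu hu) hv]

set_option maxHeartbeats 2000000 in
lemma stmt12_Kpos (u c v : ℝ) (hu : 0 ≤ u) (hv : 0 ≤ v) (huc : 4*u ≤ 3*c)
    (hD : 0 ≤ 3*v^2 + 2*u*v + u^2 - u*c) :
    0 ≤ 243*c^3*v^2 - 603*u*c^2*v^2 + 90*u*c^3*v - 36*u*c^4 + 504*u^2*c*v^2
      - 252*u^2*c^2*v + 135*u^2*c^3 - 144*u^3*v^2 + 234*u^3*c*v - 189*u^3*c^2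
      - 72*u^4*v + 117*u^4*c - 27*u^5 := by
  have hc : (0:ℝ) ≤ c := by linarith
  have ht : (0:ℝ) ≤ 3*c - 4*u := by linarith
  nlinarith [mul_nonneg (mul_nonneg hu hu) hu, mul_nonneg (mul_nonneg hu hu) hv,
    mul_nonneg (mul_nonneg hu hu) hc, mul_nonneg (mul_nonneg hu hv) hv,
    mul_nonneg (mul_nonneg hu hv) hc, mul_nonneg (mul_nonneg hu hc) hc,
    mul_nonneg (mul_nonneg hv hv) hv, mul_nonneg (mul_nonneg hv hv) hc,
    mul_nonneg (mul_nonneg hv hc) hc, mul_nonneg (mul_nonneg hc hc) hc,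
    mul_nonneg (mul_nonneg hu hu) ht, mul_nonneg (mul_nonneg hu hv) ht,
    mul_nonneg (mul_nonneg hu hc) ht, mul_nonneg (mul_nonneg hv hv) ht,
    mul_nonneg (mul_nonneg hv hc) ht, mul_nonneg (mul_nonneg hc hc) ht,
    hD, mul_nonneg hD hD,
    mul_nonneg hv (sq_nonneg (3*c - 4*u)), mul_nonneg hc (sq_nonneg (3*c - 4*u)),
    mul_nonneg hv (sq_nonneg (c - 3*u)), mul_nonneg hc (sq_nonneg (c - 3*u)),
    mul_nonneg hu (sq_nonneg (c - 3*v)), mul_nonneg hc (sq_nonneg (c - 3*v)),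
    mul_nonneg hc (sq_nonneg (u - 3*v)), mul_nonneg hu (sq_nonneg (u - 3*v))]

-- stmt12_three-var sorted lemma
lemma stmt12_three_sorted (g d a b e : ℝ) (hg : 0 ≤ g) (hgd : g ≤ d)
    (hab : a ≤ b) (hbe : b ≤ e)
    (hs : a + b + e = 2*g + d) (hq : a^2 + b^2 + e^2 = 2*g^2 + d^2) :
    a*b*e ≤ g^2*d := by
  have he2 : a*b + a*e + b*e = g^2 + 2*g*d := by
    linear_combination (a + b + e + 2*g + d) * hs / 2 - hq / 2
  have hag : a ≤ g := by
    by_contra hcon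
    push_neg at hcon
    have h1 : 0 < a - g := by linarith
    have h2 : 0 < b - g := by linarith
    have h3 : 0 < e - g := by linarith
    nlinarith [mul_pos h1 h2, mul_pos h1 h3, mul_pos h2 h3]
  have hbg : g ≤ b := by
    by_contra hcon
    push_neg at hcon
    have h1 : 0 < g - b := by linarith
    have h2 : 0 ≤ g - a := by linarith
    nlinarith [mul_pos h1 h1, sq_nonneg (g - a), sq_nonneg (2*g - a - b),
      mul_nonneg (by linarith : (0:ℝ) ≤ d - g) (by linarith : (0:ℝ) ≤ 2*g - a - b)]
  have hP : 0 ≤ (g - a) * ((b - g) * (e - g)) :=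
    mul_nonneg (by linarith) (mul_nonneg (by linarith) (by linarith))
  nlinarith [hP]

lemma stmt12_three (g d a b e : ℝ) (hg : 0 ≤ g) (hgd : g ≤ d)
    (ha : 0 ≤ a) (hb : 0 ≤ b) (he : 0 ≤ e)
    (hs : a + b + e = 2*g + d) (hq : a^2 + b^2 + e^2 = 2*g^2 + d^2) :
    a*b*e ≤ g^2*d := by
  rcases le_total a b with h1 | h1 <;> rcases le_total b e with h2 | h2 <;>
    rcases le_total a e with h3 | h3
  · exact stmt12_three_sorted g d a b e hg hgd h1 h2 hs hq
  · exact stmt12_three_sorted g d a b e hg hgd h1 h2 hs hq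
  · calc a*b*e = a*e*b := by ring
      _ ≤ g^2*d := stmt12_three_sorted g d a e b hg hgd h3 h2 (by linarith) (by linarith)
  · calc a*b*e = e*a*b := by ring
      _ ≤ g^2*d := stmt12_three_sorted g d e a b hg hgd h3 h1 (by linarith) (by linarith)
  · calc a*b*e = b*a*e := by ring
      _ ≤ g^2*d := stmt12_three_sorted g d b a e hg hgd h1 h3 (by linarith) (by linarith)
  · calc a*b*e = b*e*a := by ring
      _ ≤ g^2*d := stmt12_three_sorted g d b e a hg hgd h2 h3 (by linarith) (by linarith)
  · calc a*b*e = e*b*a := by ring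
      _ ≤ g^2*d := stmt12_three_sorted g d e b a hg hgd h2 h1 (by linarith) (by linarith)
  · calc a*b*e = e*b*a := by ring
      _ ≤ g^2*d := stmt12_three_sorted g d e b a hg hgd h2 h1 (by linarith) (by linarith)

set_option maxHeartbeats 1000000 in
lemma stmt12_four (v c x a b d : ℝ) (hv : 0 ≤ v) (hc : 0 ≤ c)
    (hx : 0 ≤ x) (ha : 0 ≤ a) (hb : 0 ≤ b) (hd : 0 ≤ d)
    (hax : a ≤ x) (hbx : b ≤ x) (hdx : d ≤ x)
    (hsum : x + a + b + d = c + 4*v)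
    (hsq : x^2 + a^2 + b^2 + d^2 = c^2 + 2*c*v + 4*v^2) :
    x*a*b*d ≤ v^3*(c+v) := by
  have hx4 : c + 4*v ≤ 4*x := by linarith
  have hxv : v ≤ x := by linarith
  -- x ≤ c + v
  have hkey : (x-v)^2 + (a-v)^2 + (b-v)^2 + (d-v)^2 = c^2 := by
    linear_combination hsq - 2*v*hsum
  have hxcv : x ≤ c + v := by
    nlinarith [sq_nonneg (a-v), sq_nonneg (b-v), sq_nonneg (d-v)]
  have hu : (0:ℝ) ≤ c + v - x := by linarith
  -- abbreviations as equations
  have hS : a + b + d = c + 4*v - x := by linarith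
  have hQ : a^2 + b^2 + d^2 = c^2 + 2*c*v + 4*v^2 - x^2 := by linarith
  -- R
  have h3q : 0 ≤ 6*(c^2 + 2*c*v + 4*v^2 - x^2) - 2*(c + 4*v - x)^2 := by
    nlinarith [sq_nonneg (a-b), sq_nonneg (a-d), sq_nonneg (b-d), hS, hQ,
      sq_nonneg (a+b+d - (c+4*v-x))]
  set R := Real.sqrt (6*(c^2 + 2*c*v + 4*v^2 - x^2) - 2*(c + 4*v - x)^2) with hRdef
  have hR0 : 0 ≤ R := Real.sqrt_nonneg _
  have hR2 : R^2 = 6*(c^2 + 2*c*v + 4*v^2 - x^2) - 2*(c + 4*v - x)^2 := Real.sq_sqrt h3q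
  have hqs : c^2 + 2*c*v + 4*v^2 - x^2 ≤ (c + 4*v - x)^2 := by
    nlinarith [mul_nonneg ha hb, mul_nonneg ha hd, mul_nonneg hb hd, hS, hQ,
      sq_nonneg (a+b+d - (c+4*v-x))]
  have hR2s : R ≤ 2*(c + 4*v - x) := by
    apply stmt12_sqle _ _ hR0 (by linarith)
    nlinarith [hR2, hqs]
  -- gamma, delta
  have hg0 : 0 ≤ (2*(c + 4*v - x) - R)/6 := by linarith
  have hgd : (2*(c + 4*v - x) - R)/6 ≤ ((c + 4*v - x) + R)/3 := by linarith
  have h3 : a*b*d ≤ ((2*(c + 4*v - x) - R)/6)^2 * (((c + 4*v - x) + R)/3) := by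
    apply stmt12_three _ _ a b d hg0 hgd ha hb hd
    · linear_combination hS
    · linear_combination hQ - hR2/6
  -- outer bound
  have hH1 : 0 ≤ 108*c^2*v - (c+v-x)*(180*c*v - 36*c^2) + (c+v-x)^2*(80*v - 64*c) + 28*(c+v-x)^3 :=
    stmt12_H1pos (c+v-x) c v hu hv (by linarith)
  have hG1 : 0 ≤ 108*v^3*(c+v) - x*(4*(c+4*v-x)^3 - 3*(c+4*v-x)*(6*(c^2+2*c*v+4*v^2-x^2) - 2*(c+4*v-x)^2)) := by
    nlinarith [mul_nonneg hu hH1]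
  have hD : 0 ≤ 3*v^2 + 2*(c+v-x)*v + (c+v-x)^2 - (c+v-x)*c := by nlinarith [hqs]
  have hK := stmt12_Kpos (c+v-x) c v hu hv (by linarith) hD
  have hB : 0 ≤ x*(6*(c^2+2*c*v+4*v^2-x^2) - 2*(c+4*v-x)^2) := mul_nonneg hx h3q
  have hsqle : (x*(6*(c^2+2*c*v+4*v^2-x^2) - 2*(c+4*v-x)^2)*R)^2 ≤
      (108*v^3*(c+v) - x*(4*(c+4*v-x)^3 - 3*(c+4*v-x)*(6*(c^2+2*c*v+4*v^2-x^2) - 2*(c+4*v-x)^2)))^2 := by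
    have hexp : (x*(6*(c^2+2*c*v+4*v^2-x^2) - 2*(c+4*v-x)^2)*R)^2
        = (x*(6*(c^2+2*c*v+4*v^2-x^2) - 2*(c+4*v-x)^2))^2 * (6*(c^2+2*c*v+4*v^2-x^2) - 2*(c+4*v-x)^2) := by
      rw [mul_pow, hR2]
    rw [hexp]
    nlinarith [mul_nonneg (mul_nonneg (sq_nonneg (c+v-x)) (by linarith : (0:ℝ) ≤ x - v)) hK]
  have hBR : x*(6*(c^2+2*c*v+4*v^2-x^2) - 2*(c+4*v-x)^2)*R ≤
      108*v^3*(c+v) - x*(4*(c+4*v-x)^3 - 3*(c+4*v-x)*(6*(c^2+2*c*v+4*v^2-x^2) - 2*(c+4*v-x)^2)) :=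
    stmt12_sqle _ _ (mul_nonneg hB hR0) hG1 hsqle
  have hid : x*(((2*(c + 4*v - x) - R)/6)^2 * (((c + 4*v - x) + R)/3)) =
      (x*(4*(c+4*v-x)^3 - 3*(c+4*v-x)*(6*(c^2+2*c*v+4*v^2-x^2) - 2*(c+4*v-x)^2))
       + x*(6*(c^2+2*c*v+4*v^2-x^2) - 2*(c+4*v-x)^2)*R)/108 := by
    linear_combination (x*(R - 3*(c+4*v-x))/108) * hR2
  calc x*a*b*d = x*(a*b*d) := by ring
    _ ≤ x*(((2*(c + 4*v - x) - R)/6)^2 * (((c + 4*v - x) + R)/3)) :=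
        mul_le_mul_of_nonneg_left h3 hx
    _ ≤ v^3*(c+v) := by rw [hid]; linarith

/-- For 1/4 ≤ k ≤ 1 and t ≥ 1 with (t⁴+3)/(3+t²)² = k, all
y₁,y₂,y₃,y₄ ≥ 0 with sum 1 and sum of squares k satisfy y₁y₂y₃y₄ ≤ t²/(3+t²)⁴,
with equality attained at (y₁,y₂,y₃,y₄) = (t²,1,1,1)/(3+t²). -/
theorem stmt12 (k t : ℝ) (hk1 : 1 / 4 ≤ k) (hk2 : k ≤ 1) (ht : 1 ≤ t)
    (htk : (t ^ 4 + 3) / (3 + t ^ 2) ^ 2 = k) :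
    (∀ y : Fin 4 → ℝ, (∀ i, 0 ≤ y i) → (∑ i, y i) = 1 → (∑ i, y i ^ 2) = k →
      y 0 * y 1 * y 2 * y 3 ≤ t ^ 2 / (3 + t ^ 2) ^ 4) ∧
    (t ^ 2 / (3 + t ^ 2)) * (1 / (3 + t ^ 2)) * (1 / (3 + t ^ 2)) * (1 / (3 + t ^ 2)) =
      t ^ 2 / (3 + t ^ 2) ^ 4 := by
  have ht2 : (0:ℝ) < 3 + t^2 := by positivity
  constructor
  · intro y hy hsum hsq
    rw [Fin.sum_univ_four] at hsum hsq
    have hv : (0:ℝ) ≤ 1/(3+t^2) := by positivity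
    have hc : (0:ℝ) ≤ (t^2-1)/(3+t^2) := by
      apply div_nonneg _ (le_of_lt ht2); nlinarith
    have hcv : (t^2-1)/(3+t^2) + 4*(1/(3+t^2)) = 1 := by field_simp; ring
    have hk : ((t^2-1)/(3+t^2))^2 + 2*((t^2-1)/(3+t^2))*(1/(3+t^2)) + 4*(1/(3+t^2))^2 = k := by
      rw [← htk]; field_simp; ring
    have hbound : (1/(3+t^2))^3*((t^2-1)/(3+t^2)+1/(3+t^2)) = t^2/(3+t^2)^4 := by
      field_simp; ring
    obtain ⟨i, hi⟩ := Finite.exists_max y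
    rw [← hbound]
    fin_cases i
    · exact stmt12_four _ _ _ _ _ _ hv hc (hy 0) (hy 1) (hy 2) (hy 3)
        (hi 1) (hi 2) (hi 3) (by linarith) (by linarith)
    · calc y 0*y 1*y 2*y 3 = y 1*y 0*y 2*y 3 := by ring
        _ ≤ _ := stmt12_four _ _ _ _ _ _ hv hc (hy 1) (hy 0) (hy 2) (hy 3)
            (hi 0) (hi 2) (hi 3) (by linarith) (by linarith)
    · calc y 0*y 1*y 2*y 3 = y 2*y 0*y 1*y 3 := by ring
        _ ≤ _ := stmt12_four _ _ _ _ _ _ hv hc (hy 2) (hy 0) (hy 1) (hy 3)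
            (hi 0) (hi 1) (hi 3) (by linarith) (by linarith)
    · calc y 0*y 1*y 2*y 3 = y 3*y 0*y 1*y 2 := by ring
        _ ≤ _ := stmt12_four _ _ _ _ _ _ hv hc (hy 3) (hy 0) (hy 1) (hy 2)
            (hi 0) (hi 1) (hi 2) (by linarith) (by linarith)
  · field_simp
end
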